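/- Let a, h be positive reals with 2h < a < 1/2 − 2h. Then there exists a nonnegative function φ ∈ A(T) (continuous with absolutely convergent Fourier series) such that: (i) φ̂(0) = 1 and φ̂(n) ≥ 0 for all n ∈ Z; (ii) φ vanishes identically on [−a−h, −a+h] ∪ [a−h, a+h]; (iii) ‖φ − 1‖_{A^p(T)} ≤ 12·h^{(p−1)/p} for every p ≥ 1. -/

import Mathlib

/-!
The witness is `φ = 1 + ψ`, `ψ = 6 Δ_h - τ_h(· + a) - τ_h(· - a)`, with `τ_h = 2 Δ_{2h} - Δ_h`.
The triangle `Δ_w` is even, so its Fourier coefficients are cosine integrals,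
`Δ̂_w(n) = w sinc²(πnw)`; the doubling formula `sinc 2x = sinc x cos x` gives
`Δ̂_{2h}(n) = 2 Δ̂_h(n) cos²(πnh)`, hence
`ψ̂(n) = Δ̂_h(n) (6 - 2 cos(2πna) (4 cos²(πnh) - 1)) ∈ [0, 12 Δ̂_h(n)]`.
As `Δ̂_h(n) ≤ h` and `∑ Δ̂_h(n) = Δ_h(0) = 1` (the Fourier series of `Δ_h` converges absolutely),
`∑ ψ̂(n)^p ≤ (12h)^(p-1) · 12`.
Pointwise, `τ_h(· ± a)` take values in `[0, 1]` and have disjoint supports because `‖2a‖ ≥ 4h`,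
so `φ ≥ 0`; on `[a - h, a + h]` the only nonzero term of `ψ` is `τ_h(· - a) = 1`, and `φ` is even.
-/

open MeasureTheory

/-- The `n`-th Fourier coefficient of a 1-periodic function `f : ℝ → ℂ`,
`f̂(n) = ∫₀¹ f(t) e^{-2πint} dt`. -/
noncomputable def fourierCoefP (f : ℝ → ℂ) (n : ℤ) : ℂ :=
  ∫ t in (0:ℝ)..1, f t * Complex.exp ((-2) * (Real.pi : ℂ) * Complex.I * (n : ℂ) * (t : ℂ))

open Real Function intervalIntegral

noncomputable def fourierKernel (n : ℤ) (t : ℝ) : ℂ :=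
  Complex.exp ((-2) * (π : ℂ) * Complex.I * n * t)

lemma fourierCoefP_eq (f : ℝ → ℂ) (n : ℤ) :
    fourierCoefP f n = ∫ t in (0 : ℝ)..1, f t * fourierKernel n t := rfl

lemma continuous_fourierKernel (n : ℤ) : Continuous (fourierKernel n) := by
  unfold fourierKernel; fun_prop

lemma fourierKernel_add (n : ℤ) (s t : ℝ) :
    fourierKernel n (s + t) = fourierKernel n s * fourierKernel n t := by
  simp only [fourierKernel, Complex.ofReal_add, mul_add, Complex.exp_add]

lemma fourierKernel_one (n : ℤ) : fourierKernel n 1 = 1 := by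
  rw [fourierKernel, ← Complex.exp_int_mul_two_pi_mul_I (-n)]
  push_cast
  ring_nf

lemma periodic_fourierKernel (n : ℤ) : Periodic (fourierKernel n) 1 := fun t => by
  rw [fourierKernel_add, fourierKernel_one, mul_one]

lemma fourierKernel_add_fourierKernel_neg (n : ℤ) (t : ℝ) :
    fourierKernel n t + fourierKernel n (-t) = ((2 * cos (2 * π * n * t) : ℝ) : ℂ) := by
  have h : ∀ s : ℝ,
      fourierKernel n s = Complex.exp (((-(2 * π * n * s) : ℝ) : ℂ) * Complex.I) :=
    fun s => by rw [fourierKernel]; push_cast; ring_nf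
  rw [h, h, Complex.exp_mul_I, Complex.exp_mul_I]
  push_cast
  simp only [mul_neg, neg_neg, Complex.cos_neg, Complex.sin_neg]
  ring

lemma integral_fourierKernel (n : ℤ) :
    ∫ t in (0 : ℝ)..1, fourierKernel n t = if n = 0 then 1 else 0 := by
  split_ifs with hn
  · simp [fourierKernel, hn]
  · have hc : (-2) * (π : ℂ) * Complex.I * n ≠ 0 := by
      simp [Real.pi_ne_zero, Complex.I_ne_zero, hn]
    have h1 := fourierKernel_one n
    rw [fourierKernel, Complex.ofReal_one, mul_one] at h1
    simp only [fourierKernel]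
    rw [integral_exp_mul_complex hc, Complex.ofReal_one, mul_one, h1, Complex.ofReal_zero, mul_zero,
      Complex.exp_zero, sub_self, zero_div]

lemma fourierKernel_neg_mul_self (n : ℤ) (s : ℝ) :
    fourierKernel n (-s) * fourierKernel n s = 1 := by
  rw [← fourierKernel_add, neg_add_cancel, fourierKernel]
  simp

lemma fourierKernel_eq_fourier (n : ℤ) (t : ℝ) :
    fourierKernel n t = fourier (-n) (t : UnitAddCircle) := by
  rw [fourier_coe_apply, fourierKernel]
  push_cast
  ring_nf

section FourierCoefficients

variable {f g : ℝ → ℂ}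

lemma fourierCoefP_add (hf : IntervalIntegrable f volume 0 1)
    (hg : IntervalIntegrable g volume 0 1) (n : ℤ) :
    fourierCoefP (fun t => f t + g t) n = fourierCoefP f n + fourierCoefP g n := by
  simp only [fourierCoefP_eq, add_mul]
  exact integral_add (hf.mul_continuousOn (continuous_fourierKernel n).continuousOn)
    (hg.mul_continuousOn (continuous_fourierKernel n).continuousOn)

lemma fourierCoefP_sub (hf : IntervalIntegrable f volume 0 1)
    (hg : IntervalIntegrable g volume 0 1) (n : ℤ) :
    fourierCoefP (fun t => f t - g t) n = fourierCoefP f n - fourierCoefP g n := by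
  simp only [fourierCoefP_eq, sub_mul]
  exact integral_sub (hf.mul_continuousOn (continuous_fourierKernel n).continuousOn)
    (hg.mul_continuousOn (continuous_fourierKernel n).continuousOn)

lemma fourierCoefP_const_mul (c : ℂ) (f : ℝ → ℂ) (n : ℤ) :
    fourierCoefP (fun t => c * f t) n = c * fourierCoefP f n := by
  simp only [fourierCoefP_eq, mul_assoc, intervalIntegral.integral_const_mul]

lemma fourierCoefP_const (c : ℂ) (n : ℤ) :
    fourierCoefP (fun _ => c) n = if n = 0 then c else 0 := by
  rw [fourierCoefP_eq, intervalIntegral.integral_const_mul, integral_fourierKernel]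
  split_ifs <;> simp

lemma fourierCoefP_comp_add (hf : Periodic f 1) (s : ℝ) (n : ℤ) :
    fourierCoefP (fun t => f (t + s)) n = fourierKernel n (-s) * fourierCoefP f n := by
  have hfk : Periodic (fun t => f t * fourierKernel n t) 1 :=
    hf.mul (periodic_fourierKernel n)
  calc fourierCoefP (fun t => f (t + s)) n
      = ∫ t in (0 : ℝ)..1, fourierKernel n (-s) * (f (t + s) * fourierKernel n (t + s)) := by
        rw [fourierCoefP_eq]
        refine integral_congr fun t _ => ?_
        rw [fourierKernel_add n t s]
        linear_combination (-(f (t + s) * fourierKernel n t)) * fourierKernel_neg_mul_self n s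
    _ = fourierKernel n (-s) * fourierCoefP f n := by
        rw [intervalIntegral.integral_const_mul,
          integral_comp_add_right (fun t => f t * fourierKernel n t), zero_add, add_comm,
          hfk.intervalIntegral_add_eq s 0, zero_add, fourierCoefP_eq]

lemma fourierCoefP_comp_sub (hf : Periodic f 1) (s : ℝ) (n : ℤ) :
    fourierCoefP (fun t => f (t - s)) n = fourierKernel n s * fourierCoefP f n := by
  simpa only [sub_eq_add_neg, neg_neg] using fourierCoefP_comp_add hf (-s) n

end FourierCoefficients

lemma fourierCoefP_ofReal_of_even {g : ℝ → ℝ} (hg : Continuous g) (hp : Periodic g 1)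
    (he : ∀ t, g (-t) = g t) (n : ℤ) :
    fourierCoefP (fun t => (g t : ℂ)) n
      = ((2 * ∫ t in (0 : ℝ)..1/2, g t * cos (2 * π * n * t) : ℝ) : ℂ) := by
  set F : ℝ → ℂ := fun t => (g t : ℂ) * fourierKernel n t with hF
  have hFc : Continuous F := (Complex.continuous_ofReal.comp hg).mul (continuous_fourierKernel n)
  have hFp : Periodic F 1 := fun t => by simp only [hF, hp t, periodic_fourierKernel n t]
  have hsym : ∀ t, F (-t) + F t = ((2 * (g t * cos (2 * π * n * t)) : ℝ) : ℂ) := fun t => by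
    simp only [hF, he, ← mul_add, add_comm (fourierKernel n (-t)),
      fourierKernel_add_fourierKernel_neg]
    push_cast; ring
  calc fourierCoefP (fun t => (g t : ℂ)) n = ∫ t in (-1/2 : ℝ)..1/2, F t := by
        rw [fourierCoefP_eq, ← zero_add (1 : ℝ), hFp.intervalIntegral_add_eq 0 (-1/2)]
        norm_num
    _ = ∫ t in (0 : ℝ)..1/2, (F (-t) + F t) := by
        rw [← integral_add_adjacent_intervals (b := 0) (hFc.intervalIntegrable _ _)
          (hFc.intervalIntegrable _ _), integral_add (f := fun t => F (-t))
          ((hFc.comp continuous_neg).intervalIntegrable _ _) (hFc.intervalIntegrable _ _),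
          integral_comp_neg (fun t => F t)]
        norm_num
    _ = _ := by
        simp only [hsym, intervalIntegral.integral_ofReal, intervalIntegral.integral_const_mul]

lemma hasSum_fourierCoefP_of_summable {f : ℝ → ℂ} (hf : Continuous f) (hp : Periodic f 1)
    (hs : Summable (fourierCoefP f)) : HasSum (fourierCoefP f) (f 0) := by
  let F : C(UnitAddCircle, ℂ) :=
    ⟨hp.lift, (QuotientAddGroup.isQuotientMap_mk _).continuous_iff.2 hf⟩
  have hcoef : fourierCoeff F = fourierCoefP f := funext fun n => by
    rw [fourierCoeff_eq_intervalIntegral _ n 0, fourierCoefP_eq]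
    simp only [zero_add, div_one, one_smul, smul_eq_mul, fourierKernel_eq_fourier]
    refine integral_congr fun t _ => ?_
    simp [F, mul_comm]
  have h := has_pointwise_sum_fourier_series_of_summable (hcoef ▸ hs) (0 : UnitAddCircle)
  simp only [fourier_eval_zero, smul_eq_mul, mul_one] at h
  exact hcoef ▸ h

lemma tsum_rpow_rpow_one_div_le {ι : Type*} {x : ι → ℝ} {M S p : ℝ} (hp : 1 ≤ p)
    (hx : ∀ i, x i ∈ Set.Icc 0 M) (hM : 0 ≤ M) (hs : Summable x) (hS : ∑' i, x i ≤ S) :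
    (∑' i, x i ^ p) ^ (1 / p) ≤ M ^ ((p - 1) / p) * S ^ (1 / p) := by
  have hterm : ∀ i, x i ^ p ≤ M ^ (p - 1) * x i := fun i => by
    obtain ⟨h0, h1⟩ := hx i
    calc x i ^ p = x i ^ (p - 1) * x i := by
          rw [← rpow_add_one' h0 (by linarith), sub_add_cancel]
      _ ≤ M ^ (p - 1) * x i := by gcongr
  have hle : ∑' i, x i ^ p ≤ M ^ (p - 1) * S :=
    calc ∑' i, x i ^ p ≤ ∑' i, M ^ (p - 1) * x i :=
          (Summable.of_nonneg_of_le (fun i => rpow_nonneg (hx i).1 p) hterm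
            (hs.mul_left _)).tsum_le_tsum hterm (hs.mul_left _)
      _ ≤ M ^ (p - 1) * S := by rw [tsum_mul_left]; gcongr
  have hS : 0 ≤ S := (tsum_nonneg fun i => (hx i).1).trans hS
  calc (∑' i, x i ^ p) ^ (1 / p) ≤ (M ^ (p - 1) * S) ^ (1 / p) := by
        gcongr
        exact tsum_nonneg fun i => rpow_nonneg (hx i).1 p
    _ = M ^ ((p - 1) / p) * S ^ (1 / p) := by
        rw [mul_rpow (rpow_nonneg hM _) hS, ← rpow_mul hM, mul_one_div]

lemma UnitAddCircle.norm_coe_of_abs_le {t : ℝ} (ht : |t| ≤ 1/2) :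
    ‖(t : UnitAddCircle)‖ = |t| :=
  (AddCircle.norm_coe_eq_abs_iff (p := 1) one_ne_zero).2 (by simpa using ht)

lemma UnitAddCircle.le_norm_coe_of_mem_Icc {d t : ℝ} (ht : t ∈ Set.Icc d (1 - d)) :
    d ≤ ‖(t : UnitAddCircle)‖ := by
  rw [UnitAddCircle.norm_eq]
  rcases le_or_gt (round t) 0 with hr | hr
  · have : (round t : ℝ) ≤ 0 := by exact_mod_cast hr
    exact le_abs.2 (Or.inl (by linarith [ht.1]))
  · have : (1 : ℝ) ≤ round t := by exact_mod_cast hr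
    exact le_abs.2 (Or.inr (by linarith [ht.2]))

/-- `‖(t : UnitAddCircle)‖` is the distance from `t` to `ℤ`, so this is the 1-periodic triangle
of half-width `w` and height `1`. -/
noncomputable def triangle (w t : ℝ) : ℝ := max 0 (1 - ‖(t : UnitAddCircle)‖ / w)

section Triangle

variable {w t : ℝ}

lemma continuous_triangle (w : ℝ) : Continuous (triangle w) := by
  have : Continuous fun t : ℝ => (t : UnitAddCircle) := AddCircle.continuous_mk' 1
  unfold triangle; fun_prop

lemma periodic_triangle (w : ℝ) : Periodic (triangle w) 1 := fun t => by
  simp only [triangle, AddCircle.coe_add_period]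

lemma triangle_neg (w t : ℝ) : triangle w (-t) = triangle w t := by
  simp only [triangle, AddCircle.coe_neg, norm_neg]

lemma triangle_nonneg (w t : ℝ) : 0 ≤ triangle w t := le_max_left _ _

lemma triangle_eq_zero (hw : 0 < w) (ht : w ≤ ‖(t : UnitAddCircle)‖) : triangle w t = 0 :=
  max_eq_left (sub_nonpos.2 ((one_le_div hw).2 ht))

lemma triangle_eq (ht : ‖(t : UnitAddCircle)‖ ≤ w) :
    triangle w t = 1 - ‖(t : UnitAddCircle)‖ / w :=
  max_eq_right (sub_nonneg.2 (div_le_one_of_le₀ ht ((norm_nonneg _).trans ht)))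

end Triangle

noncomputable def triangleCoeff (w : ℝ) (n : ℤ) : ℝ := w * sinc (π * n * w) ^ 2

lemma integral_one_sub_div_mul_cos {w : ℝ} (hw : w ≠ 0) (c : ℝ) :
    ∫ t in (0 : ℝ)..w, (1 - t / w) * cos (c * t) = w / 2 * sinc (c * w / 2) ^ 2 := by
  rcases eq_or_ne c 0 with rfl | hc
  · simp only [zero_mul, cos_zero, mul_one, zero_div, sinc_zero, one_pow]
    rw [integral_sub intervalIntegrable_const (intervalIntegrable_id.div_const w),
      intervalIntegral.integral_div, integral_id, intervalIntegral.integral_const]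
    field_simp
    ring
  have hderiv : ∀ t, HasDerivAt
      (fun t => (1 - t / w) * sin (c * t) / c - cos (c * t) / (c ^ 2 * w))
      ((1 - t / w) * cos (c * t)) t := fun t => by
    have hct : HasDerivAt (fun t => c * t) c t := by simpa using (hasDerivAt_id t).const_mul c
    have hl : HasDerivAt (fun t => 1 - t / w) (-(1 / w)) t := by
      simpa using ((hasDerivAt_id t).div_const w).const_sub 1
    refine (((hl.mul hct.sin).div_const c).sub (hct.cos.div_const (c ^ 2 * w))).congr_deriv ?_
    field_simp
    ring
  have hint : Continuous fun t => (1 - t / w) * cos (c * t) := by fun_prop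
  rw [integral_eq_sub_of_hasDerivAt (fun t _ => hderiv t) (hint.intervalIntegrable _ _),
    sinc_of_ne_zero (by positivity)]
  have hcos : cos (c * w) = 1 - 2 * sin (c * w / 2) ^ 2 := by
    have := cos_two_mul (c * w / 2)
    rw [show 2 * (c * w / 2) = c * w by ring] at this
    linarith [sin_sq_add_cos_sq (c * w / 2)]
  simp only [div_self hw, sub_self, zero_mul, zero_div, mul_zero, sin_zero, cos_zero, hcos]
  field_simp
  ring

lemma fourierCoefP_triangle {w : ℝ} (hw : 0 < w) (hw' : w ≤ 1/2) (n : ℤ) :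
    fourierCoefP (fun t => (triangle w t : ℂ)) n = triangleCoeff w n := by
  rw [fourierCoefP_ofReal_of_even (continuous_triangle w) (periodic_triangle w) (triangle_neg w)]
  congr 1
  have hnorm : ∀ t ∈ Set.uIcc (0 : ℝ) (1/2), ‖(t : UnitAddCircle)‖ = t := fun t ht => by
    rw [Set.uIcc_of_le (by norm_num)] at ht
    rw [UnitAddCircle.norm_coe_of_abs_le (abs_le.2 ⟨by linarith [ht.1], ht.2⟩),
      abs_of_nonneg ht.1]
  have hcont : Continuous fun t => triangle w t * cos (2 * π * n * t) := by
    have := continuous_triangle w; fun_prop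
  have hmain : ∫ t in (0 : ℝ)..w, triangle w t * cos (2 * π * n * t)
      = ∫ t in (0 : ℝ)..w, (1 - t / w) * cos (2 * π * n * t) := by
    refine integral_congr fun t ht => ?_
    rw [Set.uIcc_of_le hw.le] at ht
    have ht' := hnorm t (by rw [Set.uIcc_of_le (by norm_num)]; exact ⟨ht.1, ht.2.trans hw'⟩)
    rw [triangle_eq (ht'.trans_le ht.2), ht']
  have htail : ∫ t in w..(1/2 : ℝ), triangle w t * cos (2 * π * n * t) = 0 := by
    refine (integral_congr fun t ht => ?_).trans integral_zero
    rw [Set.uIcc_of_le hw'] at ht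
    have ht' := hnorm t (by rw [Set.uIcc_of_le (by norm_num)]; exact ⟨hw.le.trans ht.1, ht.2⟩)
    rw [triangle_eq_zero hw (ht'.symm ▸ ht.1), zero_mul]
  rw [← integral_add_adjacent_intervals (b := w) (hcont.intervalIntegrable _ _)
    (hcont.intervalIntegrable _ _), htail, add_zero, hmain, integral_one_sub_div_mul_cos hw.ne',
    triangleCoeff]
  ring_nf

lemma sinc_two_mul (x : ℝ) : sinc (2 * x) = sinc x * cos x := by
  rcases eq_or_ne x 0 with rfl | hx
  · simp
  rw [sinc_of_ne_zero hx, sinc_of_ne_zero (by positivity), sin_two_mul]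
  field_simp

section TriangleCoeff

variable {w : ℝ}

lemma triangleCoeff_zero (w : ℝ) : triangleCoeff w 0 = w := by
  simp [triangleCoeff]

lemma triangleCoeff_nonneg (hw : 0 ≤ w) (n : ℤ) : 0 ≤ triangleCoeff w n := by
  unfold triangleCoeff; positivity

lemma triangleCoeff_le (hw : 0 ≤ w) (n : ℤ) : triangleCoeff w n ≤ w := by
  have : sinc (π * n * w) ^ 2 ≤ 1 := (sq_le_one_iff_abs_le_one _).2 (abs_sinc_le_one _)
  unfold triangleCoeff; nlinarith

lemma triangleCoeff_two_mul (w : ℝ) (n : ℤ) :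
    triangleCoeff (2 * w) n = 2 * triangleCoeff w n * cos (π * n * w) ^ 2 := by
  simp only [triangleCoeff, show π * n * (2 * w) = 2 * (π * n * w) by ring, sinc_two_mul]
  ring

lemma triangleCoeff_le_inv_sq (hw : 0 < w) {n : ℤ} (hn : n ≠ 0) :
    triangleCoeff w n ≤ (π ^ 2 * w)⁻¹ * ((n : ℝ) ^ 2)⁻¹ := by
  have hx : π * n * w ≠ 0 := by have := pi_pos; positivity
  rw [triangleCoeff, sinc_of_ne_zero hx, div_pow]
  calc w * (sin (π * n * w) ^ 2 / (π * n * w) ^ 2) ≤ w * (1 / (π * n * w) ^ 2) := by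
        gcongr; exact sin_sq_le_one _
    _ = (π ^ 2 * w)⁻¹ * ((n : ℝ) ^ 2)⁻¹ := by field_simp

lemma summable_triangleCoeff (hw : 0 < w) : Summable (triangleCoeff w) := by
  refine Summable.of_norm_bounded_eventually
    ((summable_one_div_int_pow.2 one_lt_two).mul_left (π ^ 2 * w)⁻¹) ?_
  filter_upwards [(Set.finite_singleton (0 : ℤ)).compl_mem_cofinite] with n hn
  rw [Real.norm_of_nonneg (triangleCoeff_nonneg hw.le n), one_div]
  exact triangleCoeff_le_inv_sq hw hn

lemma hasSum_triangleCoeff (hw : 0 < w) (hw' : w ≤ 1/2) : HasSum (triangleCoeff w) 1 := by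
  have hcoef : fourierCoefP (fun t => (triangle w t : ℂ)) = fun n => (triangleCoeff w n : ℂ) :=
    funext (fourierCoefP_triangle hw hw')
  have hs := hasSum_fourierCoefP_of_summable (f := fun t => (triangle w t : ℂ))
    (Complex.continuous_ofReal.comp (continuous_triangle w))
    (fun t => congrArg _ (periodic_triangle w t))
    (hcoef ▸ Complex.summable_ofReal.2 (summable_triangleCoeff hw))
  rw [hcoef, triangle, QuotientAddGroup.mk_zero, norm_zero, zero_div, sub_zero,
    max_eq_right zero_le_one] at hs
  exact_mod_cast hs

end TriangleCoeff

noncomputable def trapezoid (h t : ℝ) : ℝ := 2 * triangle (2 * h) t - triangle h t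

section Trapezoid

variable {h t : ℝ}

lemma continuous_trapezoid (h : ℝ) : Continuous (trapezoid h) :=
  (continuous_const.mul (continuous_triangle _)).sub (continuous_triangle _)

lemma periodic_trapezoid (h : ℝ) : Periodic (trapezoid h) 1 := fun t => by
  simp only [trapezoid, periodic_triangle _ t]

lemma trapezoid_neg (h t : ℝ) : trapezoid h (-t) = trapezoid h t := by
  simp only [trapezoid, triangle_neg]

lemma trapezoid_eq_one (hh : 0 < h) (ht : ‖(t : UnitAddCircle)‖ ≤ h) :
    trapezoid h t = 1 := by
  rw [trapezoid, triangle_eq ht, triangle_eq (by linarith)]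
  field_simp
  ring

lemma trapezoid_eq_zero (hh : 0 < h) (ht : 2 * h ≤ ‖(t : UnitAddCircle)‖) :
    trapezoid h t = 0 := by
  rw [trapezoid, triangle_eq_zero (by positivity) ht, triangle_eq_zero hh (by linarith)]
  ring

lemma trapezoid_mem_Icc (hh : 0 < h) (t : ℝ) : trapezoid h t ∈ Set.Icc 0 1 := by
  rcases le_total ‖(t : UnitAddCircle)‖ h with ht | ht
  · simp [trapezoid_eq_one hh ht]
  have hhalf : triangle (2 * h) t ≤ 1 / 2 := by
    refine max_le (by norm_num) ?_
    rw [sub_le_iff_le_add, ← sub_le_iff_le_add', le_div_iff₀ (by positivity)]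
    linarith
  rw [trapezoid, triangle_eq_zero hh ht, sub_zero]
  exact ⟨by linarith [triangle_nonneg (2 * h) t], by linarith⟩

lemma fourierCoefP_trapezoid (hh : 0 < h) (hh' : h ≤ 1/4) (n : ℤ) :
    fourierCoefP (fun t => (trapezoid h t : ℂ)) n
      = ((2 * triangleCoeff (2 * h) n - triangleCoeff h n : ℝ) : ℂ) := by
  have hc : ∀ w, IntervalIntegrable (fun t => (triangle w t : ℂ)) volume 0 1 :=
    fun w => (Complex.continuous_ofReal.comp (continuous_triangle w)).intervalIntegrable _ _
  simp only [trapezoid, Complex.ofReal_sub, Complex.ofReal_mul, Complex.ofReal_ofNat]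
  rw [fourierCoefP_sub ((hc _).const_mul 2) (hc _), fourierCoefP_const_mul,
    fourierCoefP_triangle (by positivity) (by linarith), fourierCoefP_triangle hh (by linarith)]

end Trapezoid

noncomputable def psi (a h t : ℝ) : ℝ :=
  6 * triangle h t - trapezoid h (t + a) - trapezoid h (t - a)

section Psi

variable {a h : ℝ}

lemma continuous_psi (a h : ℝ) : Continuous (psi a h) := by
  have := continuous_triangle h
  have := continuous_trapezoid h
  unfold psi; fun_prop

lemma periodic_psi (a h : ℝ) : Periodic (psi a h) 1 := fun t => by
  simp only [psi, add_right_comm t 1, add_sub_right_comm t 1, periodic_triangle h t,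
    periodic_trapezoid h _]

lemma psi_neg (a h t : ℝ) : psi a h (-t) = psi a h t := by
  rw [psi, psi, triangle_neg, show -t + a = -(t - a) by ring, show -t - a = -(t + a) by ring,
    trapezoid_neg, trapezoid_neg]
  ring

lemma one_add_psi_nonneg (hh : 0 < h) (h1 : 2 * h < a) (h2 : a < 1/2 - 2 * h) (t : ℝ) :
    0 ≤ 1 + psi a h t := by
  have hsum : trapezoid h (t + a) + trapezoid h (t - a) ≤ 1 := by
    have h2a : 4 * h ≤ ‖((2 * a : ℝ) : UnitAddCircle)‖ :=
      UnitAddCircle.le_norm_coe_of_mem_Icc ⟨by linarith, by linarith⟩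
    have := norm_sub_le ((t + a : ℝ) : UnitAddCircle) ((t - a : ℝ) : UnitAddCircle)
    rw [← AddCircle.coe_sub, show t + a - (t - a) = 2 * a by ring] at this
    rcases le_total (2 * h) ‖((t + a : ℝ) : UnitAddCircle)‖ with ht | ht
    · rw [trapezoid_eq_zero hh ht, zero_add]; exact (trapezoid_mem_Icc hh _).2
    · rw [trapezoid_eq_zero hh (t := t - a) (by linarith), add_zero]
      exact (trapezoid_mem_Icc hh _).2
  rw [psi]
  linarith [triangle_nonneg h t]

lemma psi_eq_neg_one (hh : 0 < h) (h1 : 2 * h < a) (h2 : a < 1/2 - 2 * h) {t : ℝ}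
    (ht : t ∈ Set.Icc (a - h) (a + h)) : psi a h t = -1 := by
  obtain ⟨ht₁, ht₂⟩ := ht
  have hta : |t - a| ≤ h := abs_le.2 ⟨by linarith, by linarith⟩
  rw [psi,
    triangle_eq_zero hh (UnitAddCircle.le_norm_coe_of_mem_Icc ⟨by linarith, by linarith⟩),
    trapezoid_eq_zero hh (UnitAddCircle.le_norm_coe_of_mem_Icc ⟨by linarith, by linarith⟩),
    trapezoid_eq_one hh ((UnitAddCircle.norm_coe_of_abs_le (by linarith)).trans_le hta)]
  ring

end Psi

noncomputable def psiCoeff (a h : ℝ) (n : ℤ) : ℝ :=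
  6 * triangleCoeff h n
    - 2 * cos (2 * π * n * a) * (2 * triangleCoeff (2 * h) n - triangleCoeff h n)

section PsiCoeff

variable {h : ℝ}

lemma fourierCoefP_psi (hh : 0 < h) (hh' : h ≤ 1/4) (a : ℝ) (n : ℤ) :
    fourierCoefP (fun t => (psi a h t : ℂ)) n = psiCoeff a h n := by
  have hτc : Continuous fun t => (trapezoid h t : ℂ) :=
    Complex.continuous_ofReal.comp (continuous_trapezoid h)
  have hΔ : IntervalIntegrable (fun t => (triangle h t : ℂ)) volume 0 1 :=
    (Complex.continuous_ofReal.comp (continuous_triangle h)).intervalIntegrable _ _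
  have hτ : Periodic (fun t => (trapezoid h t : ℂ)) 1 :=
    fun t => congrArg _ (periodic_trapezoid h t)
  have hτa : IntervalIntegrable (fun t => (trapezoid h (t + a) : ℂ)) volume 0 1 :=
    (hτc.comp (continuous_add_const a)).intervalIntegrable _ _
  have hτa' : IntervalIntegrable (fun t => (trapezoid h (t - a) : ℂ)) volume 0 1 :=
    (hτc.comp (continuous_sub_right a)).intervalIntegrable _ _
  simp only [psi, Complex.ofReal_sub, Complex.ofReal_mul, Complex.ofReal_ofNat]
  rw [fourierCoefP_sub ((hΔ.const_mul 6).sub hτa) hτa', fourierCoefP_sub (hΔ.const_mul 6) hτa,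
    fourierCoefP_const_mul, fourierCoefP_comp_add hτ, fourierCoefP_comp_sub hτ,
    fourierCoefP_triangle hh (by linarith), fourierCoefP_trapezoid hh hh', sub_sub, ← add_mul,
    add_comm, fourierKernel_add_fourierKernel_neg, psiCoeff]
  push_cast
  ring

lemma psiCoeff_mem_Icc (hh : 0 ≤ h) (a : ℝ) (n : ℤ) :
    psiCoeff a h n ∈ Set.Icc 0 (12 * triangleCoeff h n) := by
  set c := cos (2 * π * n * a)
  set u := cos (π * n * h) ^ 2
  have hD := triangleCoeff_nonneg hh n
  have hpsi : psiCoeff a h n = triangleCoeff h n * (6 - 2 * c * (4 * u - 1)) := by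
    rw [psiCoeff, triangleCoeff_two_mul]; ring
  have hy : |2 * c * (4 * u - 1)| ≤ 6 := by
    have hc : |c| ≤ 1 := abs_cos_le_one _
    have hu : |4 * u - 1| ≤ 3 := abs_le.2 ⟨by nlinarith [sq_nonneg (cos (π * n * h))],
      by nlinarith [cos_sq_le_one (π * n * h)]⟩
    rw [abs_mul, abs_mul, abs_two]
    nlinarith [abs_nonneg c, abs_nonneg (4 * u - 1)]
  rw [hpsi]
  obtain ⟨hy₁, hy₂⟩ := abs_le.1 hy
  exact ⟨mul_nonneg hD (by linarith), by nlinarith⟩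

lemma psiCoeff_zero (a h : ℝ) : psiCoeff a h 0 = 0 := by
  simp only [psiCoeff, triangleCoeff_zero, Int.cast_zero, mul_zero, zero_mul, cos_zero]
  ring

lemma summable_psiCoeff (hh : 0 < h) (a : ℝ) : Summable (psiCoeff a h) :=
  Summable.of_nonneg_of_le (fun n => (psiCoeff_mem_Icc hh.le a n).1)
    (fun n => (psiCoeff_mem_Icc hh.le a n).2) ((summable_triangleCoeff hh).mul_left 12)

lemma tsum_psiCoeff_rpow_le (hh : 0 < h) (hh' : h ≤ 1/4) (a : ℝ) {p : ℝ} (hp : 1 ≤ p) :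
    (∑' n, psiCoeff a h n ^ p) ^ (1 / p) ≤ 12 * h ^ ((p - 1) / p) := by
  have hbd := psiCoeff_mem_Icc hh.le a
  have hsum : ∑' n, psiCoeff a h n ≤ 12 :=
    calc ∑' n, psiCoeff a h n ≤ ∑' n, 12 * triangleCoeff h n :=
          (summable_psiCoeff hh a).tsum_le_tsum (fun n => (hbd n).2)
            ((summable_triangleCoeff hh).mul_left 12)
      _ = 12 := by rw [tsum_mul_left, (hasSum_triangleCoeff hh (by linarith)).tsum_eq, mul_one]
  refine (tsum_rpow_rpow_one_div_le hp (M := 12 * h)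
    (fun n => ⟨(hbd n).1, (hbd n).2.trans (by linarith [triangleCoeff_le hh.le n])⟩)
    (by positivity) (summable_psiCoeff hh a) hsum).trans_eq ?_
  rw [mul_rpow (by norm_num) hh.le, mul_right_comm, ← rpow_add (by norm_num), ← add_div,
    sub_add_cancel, div_self (by linarith), rpow_one]

lemma fourierCoefP_one_add_psi (hh : 0 < h) (hh' : h ≤ 1/4) (a : ℝ) (n : ℤ) :
    fourierCoefP (fun t => ((1 + psi a h t : ℝ) : ℂ)) n
      = (((if n = 0 then 1 else 0) + psiCoeff a h n : ℝ) : ℂ) := by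
  have hψ : IntervalIntegrable (fun t => (psi a h t : ℂ)) volume 0 1 :=
    (Complex.continuous_ofReal.comp (continuous_psi a h)).intervalIntegrable _ _
  push_cast
  rw [fourierCoefP_add intervalIntegrable_const hψ,
    fourierCoefP_const, fourierCoefP_psi hh hh']
  split_ifs <;> simp

end PsiCoeff

/-- For `2h < a < 1/2 - 2h` there is a nonnegative `φ ∈ A(𝕋)` with `φ̂(0) = 1`,
`φ̂(n) ≥ 0` for all `n`, vanishing on `[-a-h,-a+h] ∪ [a-h,a+h]`, and
`‖φ - 1‖_{A^p(𝕋)} ≤ 12 h^{(p-1)/p}` for every `p ≥ 1`. -/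
theorem stmt12 (a h : ℝ) (hh0 : 0 < h) (h1 : 2 * h < a) (h2 : a < 1/2 - 2 * h) :
    ∃ φ : ℝ → ℝ, Continuous φ ∧ Function.Periodic φ 1 ∧ (∀ t, 0 ≤ φ t) ∧
      Summable (fun n : ℤ => ‖fourierCoefP (fun t => (φ t : ℂ)) n‖) ∧
      fourierCoefP (fun t => (φ t : ℂ)) 0 = 1 ∧
      (∀ n : ℤ, (fourierCoefP (fun t => (φ t : ℂ)) n).im = 0 ∧
        0 ≤ (fourierCoefP (fun t => (φ t : ℂ)) n).re) ∧
      (∀ t ∈ Set.Icc (-a - h) (-a + h) ∪ Set.Icc (a - h) (a + h), φ t = 0) ∧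
      ∀ p : ℝ, 1 ≤ p →
        (∑' n : ℤ, ‖fourierCoefP (fun t => (φ t : ℂ) - 1) n‖ ^ p) ^ (1/p)
          ≤ 12 * h ^ ((p - 1)/p) := by
  have hh' : h ≤ 1/4 := by linarith
  have hcoef := fourierCoefP_one_add_psi hh0 hh' a
  have hcoef_nonneg : ∀ n : ℤ, 0 ≤ (if n = 0 then 1 else 0) + psiCoeff a h n := fun n =>
    add_nonneg (by split_ifs <;> norm_num) (psiCoeff_mem_Icc hh0.le a n).1
  refine ⟨fun t => 1 + psi a h t, continuous_const.add (continuous_psi a h),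
    fun t => by simp only [periodic_psi a h t], one_add_psi_nonneg hh0 h1 h2, ?_, ?_, ?_, ?_, ?_⟩
  · simp only [hcoef, Complex.norm_real, Real.norm_of_nonneg (hcoef_nonneg _)]
    exact (hasSum_ite_eq 0 1).summable.add (summable_psiCoeff hh0 a)
  · beta_reduce
    rw [hcoef, psiCoeff_zero]
    simp
  · exact fun n => ⟨by rw [hcoef, Complex.ofReal_im],
      by rw [hcoef, Complex.ofReal_re]; exact hcoef_nonneg n⟩
  · rintro t (ht | ht) <;> show 1 + psi a h t = 0
    · rw [← psi_neg, psi_eq_neg_one hh0 h1 h2 ⟨by linarith [ht.2], by linarith [ht.1]⟩]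
      norm_num
    · rw [psi_eq_neg_one hh0 h1 h2 ht]; norm_num
  · intro p hp
    have hsub : ∀ n,
        fourierCoefP (fun t => ((1 + psi a h t : ℝ) : ℂ) - 1) n = psiCoeff a h n := by
      intro n
      rw [← fourierCoefP_psi hh0 hh' a n]
      congr 1; funext t; push_cast; ring
    simpa only [hsub, Complex.norm_real, Real.norm_of_nonneg (psiCoeff_mem_Icc hh0.le a _).1]
      using tsum_psiCoeff_rpow_le hh0 hh' a hp
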